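/- arXiv:1301.6325 — 2 statements merged into one kernel-verified Lean document; each statement's English description precedes it below -/
import Mathlib

section
/- Suppose the projective Gauss–Codazzi equations Q_x = k_y + k (b_y/b), P_y = ℓ_x + ℓ (c_x/c), and b Q_y + 2 b_y Q = c P_x + 2 c_x P hold on ℝ², and suppose P = Q = 0 identically (the Demoulin condition). Then for every λ ∈ ℝ with λ ≠ 0 the zero-curvature condition ∂_y U^λ − ∂_x V^λ + V^λ·U^λ − U^λ·V^λ = 0 holds, i.e., d + α^λ is a family of flat connections. -/
open Matrix

noncomputable section

/-- Partial derivative in the `x`-direction of a scalar function on `ℝ²`. -/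
def pdx (f : ℝ × ℝ → ℝ) (z : ℝ × ℝ) : ℝ := deriv (fun t => f (t, z.2)) z.1

/-- Partial derivative in the `y`-direction of a scalar function on `ℝ²`. -/
def pdy (f : ℝ × ℝ → ℝ) (z : ℝ × ℝ) : ℝ := deriv (fun t => f (z.1, t)) z.2

lemma hone : ((⊤:ℕ∞) : WithTop ℕ∞) ≠ 0 := by exact_mod_cast (by simp : (⊤:ℕ∞) ≠ 0)
lemma htwo : minSmoothness ℝ 2 ≤ ((⊤:ℕ∞) : WithTop ℕ∞) := by
  rw [minSmoothness_of_isRCLikeNormedField]; norm_cast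
lemma hplus : ((⊤:ℕ∞) : WithTop ℕ∞) + 1 ≤ ((⊤:ℕ∞) : WithTop ℕ∞) := by exact_mod_cast le_top
lemma hasDerivAt_sliceX {f : ℝ × ℝ → ℝ} (hf : DifferentiableAt ℝ f z) :
    HasDerivAt (fun t => f (t, z.2)) (fderiv ℝ f z ((1:ℝ), (0:ℝ))) z.1 := by
  have h1 : HasFDerivAt (fun t : ℝ => (t, z.2))
      ((ContinuousLinearMap.id ℝ ℝ).prod 0) z.1 :=
    HasFDerivAt.prodMk (hasFDerivAt_id z.1) (hasFDerivAt_const z.2 z.1)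
  have h2 := (hf.hasFDerivAt.comp z.1 h1).hasDerivAt
  simpa [Function.comp_def] using h2

lemma hasDerivAt_sliceY {f : ℝ × ℝ → ℝ} (hf : DifferentiableAt ℝ f z) :
    HasDerivAt (fun t => f (z.1, t)) (fderiv ℝ f z ((0:ℝ), (1:ℝ))) z.2 := by
  have h1 : HasFDerivAt (fun t : ℝ => (z.1, t))
      ((0 : ℝ →L[ℝ] ℝ).prod (ContinuousLinearMap.id ℝ ℝ)) z.2 :=
    HasFDerivAt.prodMk (hasFDerivAt_const z.1 z.2) (hasFDerivAt_id z.2)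
  have h2 := (hf.hasFDerivAt.comp z.2 h1).hasDerivAt
  simpa [Function.comp_def] using h2

lemma pdx_eq_fderiv {f : ℝ × ℝ → ℝ} (hf : DifferentiableAt ℝ f z) :
    pdx f z = fderiv ℝ f z ((1:ℝ), (0:ℝ)) := (hasDerivAt_sliceX hf).deriv

lemma pdy_eq_fderiv {f : ℝ × ℝ → ℝ} (hf : DifferentiableAt ℝ f z) :
    pdy f z = fderiv ℝ f z ((0:ℝ), (1:ℝ)) := (hasDerivAt_sliceY hf).deriv

lemma contDiff_pdx {f : ℝ × ℝ → ℝ} (hf : ContDiff ℝ (⊤ : ℕ∞) f) :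
    ContDiff ℝ (⊤ : ℕ∞) (pdx f) := by
  have : pdx f = fun z => fderiv ℝ f z ((1:ℝ), (0:ℝ)) := by
    funext z; exact pdx_eq_fderiv (hf.differentiable hone z)
  rw [this]
  exact (hf.fderiv_right hplus).clm_apply contDiff_const

lemma contDiff_pdy {f : ℝ × ℝ → ℝ} (hf : ContDiff ℝ (⊤ : ℕ∞) f) :
    ContDiff ℝ (⊤ : ℕ∞) (pdy f) := by
  have : pdy f = fun z => fderiv ℝ f z ((0:ℝ), (1:ℝ)) := by
    funext z; exact pdy_eq_fderiv (hf.differentiable hone z)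
  rw [this]
  exact (hf.fderiv_right hplus).clm_apply contDiff_const

lemma fderiv_apply_dir {f : ℝ × ℝ → ℝ} (hf : ContDiff ℝ (⊤ : ℕ∞) f) (z : ℝ × ℝ)
    (v w : ℝ × ℝ) :
    fderiv ℝ (fun u => fderiv ℝ f u v) z w = fderiv ℝ (fderiv ℝ f) z w v := by
  have hd : DifferentiableAt ℝ (fderiv ℝ f) z :=
    ((hf.fderiv_right hplus).differentiable hone) z
  have h := ((ContinuousLinearMap.apply ℝ ℝ v).hasFDerivAt.comp z hd.hasFDerivAt)
  have he : (fun u => fderiv ℝ f u v) = (ContinuousLinearMap.apply ℝ ℝ v) ∘ (fderiv ℝ f) := rfl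
  rw [he, h.fderiv]
  simp

lemma clairaut {f : ℝ × ℝ → ℝ} (hf : ContDiff ℝ (⊤ : ℕ∞) f) (z : ℝ × ℝ) :
    pdx (pdy f) z = pdy (pdx f) z := by
  have hdf := hf.differentiable hone
  have hpx : pdx f = fun u => fderiv ℝ f u ((1:ℝ), (0:ℝ)) := by
    funext u; exact pdx_eq_fderiv (hdf u)
  have hpy : pdy f = fun u => fderiv ℝ f u ((0:ℝ), (1:ℝ)) := by
    funext u; exact pdy_eq_fderiv (hdf u)
  have hsymm : IsSymmSndFDerivAt ℝ f z :=
    (hf.contDiffAt).isSymmSndFDerivAt htwo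
  rw [hpx, hpy, pdx_eq_fderiv, pdy_eq_fderiv, fderiv_apply_dir hf, fderiv_apply_dir hf,
    hsymm.eq]
  · exact ((hf.fderiv_right hplus).clm_apply contDiff_const).differentiable hone z
  · exact ((hf.fderiv_right hplus).clm_apply contDiff_const).differentiable hone z

lemma pdx_div {g h : ℝ × ℝ → ℝ} (hg : Differentiable ℝ g) (hh : Differentiable ℝ h)
    (z : ℝ × ℝ) (hz : h z ≠ 0) :
    pdx (fun w => g w / h w) z = (pdx g z * h z - g z * pdx h z) / (h z) ^ 2 := by
  have h1 : HasDerivAt (fun t => g (t, z.2)) (pdx g z) z.1 := by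
    have := hasDerivAt_sliceX (hg z); rwa [← pdx_eq_fderiv (hg z)] at this
  have h2 : HasDerivAt (fun t => h (t, z.2)) (pdx h z) z.1 := by
    have := hasDerivAt_sliceX (hh z); rwa [← pdx_eq_fderiv (hh z)] at this
  exact (h1.div h2 hz).deriv

lemma pdy_div {g h : ℝ × ℝ → ℝ} (hg : Differentiable ℝ g) (hh : Differentiable ℝ h)
    (z : ℝ × ℝ) (hz : h z ≠ 0) :
    pdy (fun w => g w / h w) z = (pdy g z * h z - g z * pdy h z) / (h z) ^ 2 := by
  have h1 : HasDerivAt (fun t => g (z.1, t)) (pdy g z) z.2 := by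
    have := hasDerivAt_sliceY (hg z); rwa [← pdy_eq_fderiv (hg z)] at this
  have h2 : HasDerivAt (fun t => h (z.1, t)) (pdy h z) z.2 := by
    have := hasDerivAt_sliceY (hh z); rwa [← pdy_eq_fderiv (hh z)] at this
  exact (h1.div h2 hz).deriv

lemma pdx_const_mul (a : ℝ) (f : ℝ × ℝ → ℝ) (z : ℝ × ℝ) :
    pdx (fun w => a * f w) z = a * pdx f z := by
  simp only [pdx]; exact deriv_const_mul_field a

lemma pdy_const_mul (a : ℝ) (f : ℝ × ℝ → ℝ) (z : ℝ × ℝ) :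
    pdy (fun w => a * f w) z = a * pdy f z := by
  simp only [pdy]; exact deriv_const_mul_field a

lemma pdx_const (a : ℝ) (z : ℝ × ℝ) : pdx (fun _ => a) z = 0 := by
  simp [pdx]

lemma pdy_const (a : ℝ) (z : ℝ × ℝ) : pdy (fun _ => a) z = 0 := by
  simp [pdy]

lemma pdx_neg (f : ℝ × ℝ → ℝ) (z : ℝ × ℝ) :
    pdx (fun w => -(f w)) z = -(pdx f z) := by
  simp only [pdx]; exact deriv.neg

lemma pdy_neg (f : ℝ × ℝ → ℝ) (z : ℝ × ℝ) :
    pdy (fun w => -(f w)) z = -(pdy f z) := by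
  simp only [pdy]; exact deriv.neg


/-- `k = (bc − ∂_y(b_x/b))/2`. -/
def kF (b c : ℝ × ℝ → ℝ) (z : ℝ × ℝ) : ℝ :=
  (b z * c z - pdy (fun w => pdx b w / b w) z) / 2

/-- `ℓ = (bc − ∂_y(c_x/c))/2`. -/
def lF (b c : ℝ × ℝ → ℝ) (z : ℝ × ℝ) : ℝ :=
  (b z * c z - pdy (fun w => pdx c w / c w) z) / 2

/-- `P = p + b_y/2 − c_{xx}/(2c) + c_x²/(4c²)`. -/
def PF (b c p : ℝ × ℝ → ℝ) (z : ℝ × ℝ) : ℝ :=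
  p z + pdy b z / 2 - pdx (fun w => pdx c w) z / (2 * c z) + (pdx c z) ^ 2 / (4 * (c z) ^ 2)

/-- `Q = q + c_x/2 − b_{yy}/(2b) + b_y²/(4b²)`. -/
def QF (b c q : ℝ × ℝ → ℝ) (z : ℝ × ℝ) : ℝ :=
  q z + pdx c z / 2 - pdy (fun w => pdy b w) z / (2 * b z) + (pdy b z) ^ 2 / (4 * (b z) ^ 2)

/-- The Wilczynski coefficient matrix `U`. -/
def Umat (b c p q : ℝ × ℝ → ℝ) (z : ℝ × ℝ) : Matrix (Fin 4) (Fin 4) ℝ :=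
  !![pdx c z / (2 * c z), PF b c p z, kF b c z, b z * QF b c q z;
     1, -(pdx c z / (2 * c z)), 0, kF b c z;
     0, b z, pdx c z / (2 * c z), PF b c p z;
     0, 0, 1, -(pdx c z / (2 * c z))]

/-- The Wilczynski coefficient matrix `V`. -/
def Vmat (b c p q : ℝ × ℝ → ℝ) (z : ℝ × ℝ) : Matrix (Fin 4) (Fin 4) ℝ :=
  !![pdy b z / (2 * b z), lF b c z, QF b c q z, c z * PF b c p z;
     0, pdy b z / (2 * b z), c z, QF b c q z;
     1, 0, -(pdy b z / (2 * b z)), lF b c z;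
     0, 1, 0, -(pdy b z / (2 * b z))]

/-- Entrywise partial `x`-derivative of a matrix-valued function on `ℝ²`. -/
def pdxM (F : ℝ × ℝ → Matrix (Fin 4) (Fin 4) ℝ) (z : ℝ × ℝ) : Matrix (Fin 4) (Fin 4) ℝ :=
  Matrix.of fun i j => pdx (fun w => F w i j) z

/-- Entrywise partial `y`-derivative of a matrix-valued function on `ℝ²`. -/
def pdyM (F : ℝ × ℝ → Matrix (Fin 4) (Fin 4) ℝ) (z : ℝ × ℝ) : Matrix (Fin 4) (Fin 4) ℝ :=
  Matrix.of fun i j => pdy (fun w => F w i j) z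

/-- The loop-parameter family `U^λ` associated to the first-order Gauss map. -/
def ULam (b c p q : ℝ × ℝ → ℝ) (lam : ℝ) (z : ℝ × ℝ) : Matrix (Fin 4) (Fin 4) ℝ :=
  !![pdx c z / (2 * c z), lam⁻¹ * PF b c p z, lam⁻¹ * kF b c z, lam⁻¹ * (b z * QF b c q z);
     lam⁻¹, -(pdx c z / (2 * c z)), 0, lam⁻¹ * kF b c z;
     0, lam⁻¹ * b z, pdx c z / (2 * c z), lam⁻¹ * PF b c p z;
     0, 0, lam⁻¹, -(pdx c z / (2 * c z))]

/-- The loop-parameter family `V^λ` associated to the first-order Gauss map. -/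
def VLam (b c p q : ℝ × ℝ → ℝ) (lam : ℝ) (z : ℝ × ℝ) : Matrix (Fin 4) (Fin 4) ℝ :=
  !![pdy b z / (2 * b z), lam * lF b c z, lam * QF b c q z, lam * (c z * PF b c p z);
     0, pdy b z / (2 * b z), lam * c z, lam * QF b c q z;
     lam, 0, -(pdy b z / (2 * b z)), lam * lF b c z;
     0, lam, 0, -(pdy b z / (2 * b z))]

set_option maxHeartbeats 4000000 in
/-- If the projective Gauss–Codazzi equations hold and `P = Q = 0` identically (the
Demoulin condition), then `d + α^λ` is a family of flat connections: the zero-curvature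
condition for `U^λ, V^λ` holds for every `λ ≠ 0`. -/
theorem demoulin_gives_flat_connections
    (b c p q : ℝ × ℝ → ℝ)
    (hb : ContDiff ℝ (⊤ : ℕ∞) b) (hc : ContDiff ℝ (⊤ : ℕ∞) c)
    (hp : ContDiff ℝ (⊤ : ℕ∞) p) (hq : ContDiff ℝ (⊤ : ℕ∞) q)
    (hb0 : ∀ z, b z ≠ 0) (hc0 : ∀ z, c z ≠ 0)
    (hGC1 : ∀ z, pdx (QF b c q) z = pdy (kF b c) z + kF b c z * (pdy b z / b z))
    (hGC2 : ∀ z, pdy (PF b c p) z = pdx (lF b c) z + lF b c z * (pdx c z / c z))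
    (hGC3 : ∀ z, b z * pdy (QF b c q) z + 2 * pdy b z * QF b c q z
        = c z * pdx (PF b c p) z + 2 * pdx c z * PF b c p z)
    (hP : ∀ z, PF b c p z = 0) (hQ : ∀ z, QF b c q z = 0) :
    ∀ lam : ℝ, lam ≠ 0 → ∀ z,
        pdyM (ULam b c p q lam) z - pdxM (VLam b c p q lam) z
          + VLam b c p q lam z * ULam b c p q lam z
          - ULam b c p q lam z * VLam b c p q lam z = 0 := by
  intro lam hlam z
  have hbd : Differentiable ℝ b := hb.differentiable hone
  have hcd : Differentiable ℝ c := hc.differentiable hone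
  have hpdyb : Differentiable ℝ (pdy b) := (contDiff_pdy hb).differentiable hone
  have hpdxb : Differentiable ℝ (pdx b) := (contDiff_pdx hb).differentiable hone
  have hQ0 : QF b c q = fun _ => 0 := funext hQ
  have hP0 : PF b c p = fun _ => 0 := funext hP
  have hkY : pdy (kF b c) z = -(kF b c z * (pdy b z / b z)) := by
    have h := hGC1 z
    rw [hQ0, pdx_const] at h
    linarith
  have hlX : pdx (lF b c) z = -(lF b c z * (pdx c z / c z)) := by
    have h := hGC2 z
    rw [hP0, pdy_const] at h
    linarith
  have hUdiag : pdy (fun w => pdx c w / (2 * c w)) z = b z * c z / 2 - lF b c z := by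
    have e : (fun w => pdx c w / (2 * c w)) = fun w => (2:ℝ)⁻¹ * (pdx c w / c w) := by
      funext w
      rw [mul_comm, ← div_div, div_eq_inv_mul]
    rw [e, pdy_const_mul]
    have h4 : pdy (fun w => pdx c w / c w) z = b z * c z - 2 * lF b c z := by
      simp only [lF]; ring
    rw [h4]; ring
  have hVdiag : pdx (fun w => pdy b w / (2 * b w)) z = b z * c z / 2 - kF b c z := by
    have e : (fun w => pdy b w / (2 * b w)) = fun w => (2:ℝ)⁻¹ * (pdy b w / b w) := by
      funext w
      rw [mul_comm, ← div_div, div_eq_inv_mul]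
    rw [e, pdx_const_mul]
    have h1 := pdx_div hpdyb hbd z (hb0 z)
    have h2 := pdy_div hpdxb hbd z (hb0 z)
    have h3 : pdx (pdy b) z = pdy (pdx b) z := clairaut hb z
    have h4 : pdy (fun w => pdx b w / b w) z = b z * c z - 2 * kF b c z := by
      simp only [kF]; ring
    rw [h2] at h4
    rw [h1, h3]
    linear_combination h4 / 2
  ext i j
  fin_cases i <;> fin_cases j <;>
    simp only [pdyM, pdxM, ULam, VLam, Matrix.sub_apply, Matrix.add_apply, Matrix.mul_apply,
      Fin.sum_univ_four, Fin.zero_eta, Fin.mk_one, Fin.reduceFinMk, Matrix.of_apply, Matrix.cons_val', Matrix.cons_val_zero,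
      Matrix.cons_val_one, Matrix.head_cons, Matrix.empty_val', Matrix.cons_val_fin_one,
      Matrix.head_fin_const, Matrix.zero_apply, Fin.isValue, Matrix.cons_val_two,
      Matrix.cons_val_three, Matrix.tail_cons, hP, hQ, mul_zero, zero_mul, add_zero, zero_add,
      pdy_neg, pdx_neg, pdy_const_mul, pdx_const_mul, pdy_const, pdx_const,
      hUdiag, hVdiag, hkY, hlX] <;>
  first
    | (field_simp [hb0 z, hc0 z, hlam]; done)
    | (field_simp [hb0 z, hc0 z, hlam]; ring1)
    | (rw [inv_mul_cancel_left₀ hlam,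
        show lam⁻¹ * kF b c z * lam = kF b c z from by
          rw [mul_comm, ← mul_assoc, mul_inv_cancel₀ hlam, one_mul],
        show lam * c z * (lam⁻¹ * b z) = c z * b z from by field_simp; ring];
       field_simp [hb0 z, hc0 z]; ring)
end
end

section
/- Let F : ℝ² → GL₄(ℝ) be smooth and satisfy F_x = F·U and F_y = F·V, where U, V are the Wilczynski coefficient matrices, and define g₂ = F J₂ Fᵗ with J₂ the antidiagonal matrix with entries (1, −1, −1, 1). Then, with ⟨X, Y⟩ = Tr(g₂⁻¹ X g₂⁻¹ Y), one has ⟨∂_x g₂, ∂_x g₂⟩ = 0, ⟨∂_y g₂, ∂_y g₂⟩ = 0, and ⟨∂_x g₂, ∂_y g₂⟩ = 4 b c ≠ 0; that is, the conformal Gauss map g₂ is always conformal for the conformal structure in which x and y are null coordinates. -/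
open Matrix

noncomputable section

/-- The antidiagonal matrix `J₂` with entries `(1, −1, −1, 1)` read from the `(1,4)`
entry down to the `(4,1)` entry. -/
def J₂ : Matrix (Fin 4) (Fin 4) ℝ := !![0,0,0,1; 0,0,-1,0; 0,-1,0,0; 1,0,0,0]


lemma J₂_mul_J₂ : J₂ * J₂ = 1 := by
  ext i j
  fin_cases i <;> fin_cases j <;>
    simp [J₂, Matrix.mul_apply, Fin.sum_univ_four, Matrix.one_apply, Matrix.vecHead,
      Matrix.vecTail]

lemma J₂_inv : J₂⁻¹ = J₂ := Matrix.inv_eq_right_inv J₂_mul_J₂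

lemma hasDerivAt_pdx (f : ℝ × ℝ → ℝ) (hf : ContDiff ℝ (⊤ : ℕ∞) f) (z : ℝ × ℝ) :
    HasDerivAt (fun t => f (t, z.2)) (pdx f z) z.1 := by
  have h : DifferentiableAt ℝ (fun t => f (t, z.2)) z.1 := by
    have := (hf.differentiable (by simp) (z.1, z.2)).comp z.1
      (f := fun t => (t, z.2)) (by fun_prop)
    exact this
  simpa [pdx] using h.hasDerivAt

lemma hasDerivAt_pdy (f : ℝ × ℝ → ℝ) (hf : ContDiff ℝ (⊤ : ℕ∞) f) (z : ℝ × ℝ) :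
    HasDerivAt (fun t => f (z.1, t)) (pdy f z) z.2 := by
  have h : DifferentiableAt ℝ (fun t => f (z.1, t)) z.2 := by
    have := (hf.differentiable (by simp) (z.1, z.2)).comp z.2
      (by fun_prop)
    exact this
  simpa [pdy] using h.hasDerivAt

lemma pdxM_FJFt (F : ℝ × ℝ → Matrix (Fin 4) (Fin 4) ℝ)
    (hFsm : ∀ i j, ContDiff ℝ (⊤ : ℕ∞) fun z => F z i j) (z : ℝ × ℝ) :
    pdxM (fun w => F w * J₂ * (F w)ᵀ) z
      = pdxM F z * J₂ * (F z)ᵀ + F z * J₂ * (pdxM F z)ᵀ := by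
  ext i j
  have hF : ∀ a b : Fin 4, HasDerivAt (fun t => F (t, z.2) a b) (pdxM F z a b) z.1 := by
    intro a b
    simpa [pdxM] using hasDerivAt_pdx (fun w => F w a b) (hFsm a b) z
  have hsum : HasDerivAt
      (fun t => ∑ l : Fin 4, ∑ k : Fin 4, F (t, z.2) i k * J₂ k l * F (t, z.2) j l)
      (∑ l : Fin 4, ∑ k : Fin 4,
        (pdxM F z i k * J₂ k l * F z j l + F z i k * J₂ k l * pdxM F z j l)) z.1 := by
    refine HasDerivAt.fun_sum fun l _ => HasDerivAt.fun_sum fun k _ => ?_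
    have h := ((hF i k).mul_const (J₂ k l)).fun_mul (hF j l)
    simpa using h
  have e1 : (fun t => (fun w => F w * J₂ * (F w)ᵀ) (t, z.2) i j)
      = fun t => ∑ l : Fin 4, ∑ k : Fin 4, F (t, z.2) i k * J₂ k l * F (t, z.2) j l := by
    funext t
    simp [Matrix.mul_apply, Matrix.transpose_apply, Finset.sum_mul]
  have e2 : (pdxM F z * J₂ * (F z)ᵀ + F z * J₂ * (pdxM F z)ᵀ) i j
      = ∑ l : Fin 4, ∑ k : Fin 4,
        (pdxM F z i k * J₂ k l * F z j l + F z i k * J₂ k l * pdxM F z j l) := by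
    simp [Matrix.add_apply, Matrix.mul_apply, Matrix.transpose_apply, Finset.sum_mul,
      Finset.sum_add_distrib]
  show pdx (fun w => (F w * J₂ * (F w)ᵀ) i j) z = _
  rw [pdx, e2]
  rw [show (fun t => (F (t, z.2) * J₂ * (F (t, z.2))ᵀ) i j)
      = fun t => ∑ l : Fin 4, ∑ k : Fin 4, F (t, z.2) i k * J₂ k l * F (t, z.2) j l from e1]
  exact hsum.deriv

lemma pdyM_FJFt (F : ℝ × ℝ → Matrix (Fin 4) (Fin 4) ℝ)
    (hFsm : ∀ i j, ContDiff ℝ (⊤ : ℕ∞) fun z => F z i j) (z : ℝ × ℝ) :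
    pdyM (fun w => F w * J₂ * (F w)ᵀ) z
      = pdyM F z * J₂ * (F z)ᵀ + F z * J₂ * (pdyM F z)ᵀ := by
  ext i j
  have hF : ∀ a b : Fin 4, HasDerivAt (fun t => F (z.1, t) a b) (pdyM F z a b) z.2 := by
    intro a b
    simpa [pdyM] using hasDerivAt_pdy (fun w => F w a b) (hFsm a b) z
  have hsum : HasDerivAt
      (fun t => ∑ l : Fin 4, ∑ k : Fin 4, F (z.1, t) i k * J₂ k l * F (z.1, t) j l)
      (∑ l : Fin 4, ∑ k : Fin 4,
        (pdyM F z i k * J₂ k l * F z j l + F z i k * J₂ k l * pdyM F z j l)) z.2 := by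
    refine HasDerivAt.fun_sum fun l _ => HasDerivAt.fun_sum fun k _ => ?_
    have h := ((hF i k).mul_const (J₂ k l)).fun_mul (hF j l)
    simpa using h
  have e1 : (fun t => (fun w => F w * J₂ * (F w)ᵀ) (z.1, t) i j)
      = fun t => ∑ l : Fin 4, ∑ k : Fin 4, F (z.1, t) i k * J₂ k l * F (z.1, t) j l := by
    funext t
    simp [Matrix.mul_apply, Matrix.transpose_apply, Finset.sum_mul]
  have e2 : (pdyM F z * J₂ * (F z)ᵀ + F z * J₂ * (pdyM F z)ᵀ) i j
      = ∑ l : Fin 4, ∑ k : Fin 4,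
        (pdyM F z i k * J₂ k l * F z j l + F z i k * J₂ k l * pdyM F z j l) := by
    simp [Matrix.add_apply, Matrix.mul_apply, Matrix.transpose_apply, Finset.sum_mul,
      Finset.sum_add_distrib]
  show pdy (fun w => (F w * J₂ * (F w)ᵀ) i j) z = _
  rw [pdy, e2]
  rw [show (fun t => (F (z.1, t) * J₂ * (F (z.1, t))ᵀ) i j)
      = fun t => ∑ l : Fin 4, ∑ k : Fin 4, F (z.1, t) i k * J₂ k l * F (z.1, t) j l from e1]
  exact hsum.deriv

lemma trace_reduce (Fz A B : Matrix (Fin 4) (Fin 4) ℝ) (hdet : Fz.det ≠ 0) :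
    ((Fz * J₂ * Fzᵀ)⁻¹ * (Fz * A * Fzᵀ) * (Fz * J₂ * Fzᵀ)⁻¹ * (Fz * B * Fzᵀ)).trace
      = (J₂ * A * J₂ * B).trace := by
  have hdetT : Fzᵀ.det ≠ 0 := by rwa [Matrix.det_transpose]
  have h1 : (Fz * J₂ * Fzᵀ)⁻¹ = Fzᵀ⁻¹ * (J₂ * Fz⁻¹) := by
    rw [Matrix.mul_inv_rev, Matrix.mul_inv_rev, J₂_inv]
  have hFi : Fz⁻¹ * Fz = 1 := Matrix.nonsing_inv_mul _ (Ne.isUnit hdet)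
  have hFTi : Fzᵀ * Fzᵀ⁻¹ = 1 := Matrix.mul_nonsing_inv _ (Ne.isUnit hdetT)
  rw [h1]
  have key : Fzᵀ⁻¹ * (J₂ * Fz⁻¹) * (Fz * A * Fzᵀ) * (Fzᵀ⁻¹ * (J₂ * Fz⁻¹)) * (Fz * B * Fzᵀ)
      = Fzᵀ⁻¹ * (J₂ * A * J₂ * B * Fzᵀ) := by
    calc Fzᵀ⁻¹ * (J₂ * Fz⁻¹) * (Fz * A * Fzᵀ) * (Fzᵀ⁻¹ * (J₂ * Fz⁻¹)) * (Fz * B * Fzᵀ)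
        = Fzᵀ⁻¹ * (J₂ * ((Fz⁻¹ * Fz) * (A * ((Fzᵀ * Fzᵀ⁻¹) *
            (J₂ * ((Fz⁻¹ * Fz) * (B * Fzᵀ))))))) := by
          simp only [Matrix.mul_assoc]
      _ = _ := by rw [hFi, hFTi]; simp only [Matrix.one_mul, Matrix.mul_assoc]
  rw [key, Matrix.trace_mul_comm]
  rw [show J₂ * A * J₂ * B * Fzᵀ * Fzᵀ⁻¹ = J₂ * A * J₂ * B * (Fzᵀ * Fzᵀ⁻¹) by
    simp only [Matrix.mul_assoc]]
  rw [hFTi, Matrix.mul_one]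

set_option maxHeartbeats 1600000 in
/-- For the conformal Gauss map `g₂ = F J₂ Fᵗ` of a Wilczynski frame, with
`⟨X, Y⟩ = Tr(g₂⁻¹ X g₂⁻¹ Y)` one has `⟨∂_x g₂, ∂_x g₂⟩ = 0`, `⟨∂_y g₂, ∂_y g₂⟩ = 0`
and `⟨∂_x g₂, ∂_y g₂⟩ = 4bc ≠ 0`; that is, the conformal Gauss map is always
conformal for the conformal structure in which `x` and `y` are null coordinates. -/
theorem conformalGaussMap_is_conformal
    (b c p q : ℝ × ℝ → ℝ)
    (hb : ContDiff ℝ (⊤ : ℕ∞) b) (hc : ContDiff ℝ (⊤ : ℕ∞) c)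
    (hp : ContDiff ℝ (⊤ : ℕ∞) p) (hq : ContDiff ℝ (⊤ : ℕ∞) q)
    (hb0 : ∀ z, b z ≠ 0) (hc0 : ∀ z, c z ≠ 0)
    (F : ℝ × ℝ → Matrix (Fin 4) (Fin 4) ℝ)
    (hFsm : ∀ i j, ContDiff ℝ (⊤ : ℕ∞) fun z => F z i j)
    (hFgl : ∀ z, IsUnit (F z).det)
    (hFx : ∀ z, pdxM F z = F z * Umat b c p q z)
    (hFy : ∀ z, pdyM F z = F z * Vmat b c p q z)
    (g₂ : ℝ × ℝ → Matrix (Fin 4) (Fin 4) ℝ)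
    (hg₂ : g₂ = fun z => F z * J₂ * (F z)ᵀ) :
    ∀ z, ((g₂ z)⁻¹ * pdxM g₂ z * (g₂ z)⁻¹ * pdxM g₂ z).trace = 0 ∧
         ((g₂ z)⁻¹ * pdyM g₂ z * (g₂ z)⁻¹ * pdyM g₂ z).trace = 0 ∧
         ((g₂ z)⁻¹ * pdxM g₂ z * (g₂ z)⁻¹ * pdyM g₂ z).trace = 4 * (b z * c z) ∧
         4 * (b z * c z) ≠ 0 := by
  intro z
  subst hg₂
  have hdet : (F z).det ≠ 0 := (hFgl z).ne_zero
  set U : Matrix (Fin 4) (Fin 4) ℝ := Umat b c p q z with hU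
  set V : Matrix (Fin 4) (Fin 4) ℝ := Vmat b c p q z with hV
  set A : Matrix (Fin 4) (Fin 4) ℝ := U * J₂ + J₂ * Uᵀ with hA
  set B : Matrix (Fin 4) (Fin 4) ℝ := V * J₂ + J₂ * Vᵀ with hB
  have hdX : pdxM (fun w => F w * J₂ * (F w)ᵀ) z = F z * A * (F z)ᵀ := by
    rw [pdxM_FJFt F hFsm z, hFx z, hA, ← hU]
    simp only [Matrix.transpose_mul, Matrix.mul_add, Matrix.add_mul, Matrix.mul_assoc]
  have hdY : pdyM (fun w => F w * J₂ * (F w)ᵀ) z = F z * B * (F z)ᵀ := by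
    rw [pdyM_FJFt F hFsm z, hFy z, hB, ← hV]
    simp only [Matrix.transpose_mul, Matrix.mul_add, Matrix.add_mul, Matrix.mul_assoc]
  have hbc : (4 : ℝ) * (b z * c z) ≠ 0 :=
    mul_ne_zero four_ne_zero (mul_ne_zero (hb0 z) (hc0 z))
  have hAe : A = !![2 * (b z * QF b c q z), 0, 0, 0; 0, 0, 0, 0;
      0, 0, -(2 * b z), 0; 0, 0, 0, 0] := by
    rw [hA, hU]
    ext i j
    fin_cases i <;> fin_cases j <;>
      simp [Umat, J₂, Matrix.mul_apply, Matrix.add_apply, Matrix.transpose_apply,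
        Fin.sum_univ_four, Matrix.vecHead, Matrix.vecTail, Matrix.vecMul, dotProduct] <;> ring
  have hBe : B = !![2 * (c z * PF b c p z), 0, 0, 0; 0, -(2 * c z), 0, 0;
      0, 0, 0, 0; 0, 0, 0, 0] := by
    rw [hB, hV]
    ext i j
    fin_cases i <;> fin_cases j <;>
      simp [Vmat, J₂, Matrix.mul_apply, Matrix.add_apply, Matrix.transpose_apply,
        Fin.sum_univ_four, Matrix.vecHead, Matrix.vecTail, Matrix.vecMul, dotProduct] <;> ring
  refine ⟨?_, ?_, ?_, hbc⟩
  · rw [hdX, trace_reduce _ _ _ hdet, hAe]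
    simp [J₂, Matrix.trace, Matrix.diag, Matrix.mul_apply, Fin.sum_univ_four,
      Matrix.vecHead, Matrix.vecTail]
  · rw [hdY, trace_reduce _ _ _ hdet, hBe]
    simp [J₂, Matrix.trace, Matrix.diag, Matrix.mul_apply, Fin.sum_univ_four,
      Matrix.vecHead, Matrix.vecTail]
  · rw [hdX, hdY, trace_reduce _ _ _ hdet, hAe, hBe]
    simp [J₂, Matrix.trace, Matrix.diag, Matrix.mul_apply, Fin.sum_univ_four,
      Matrix.vecHead, Matrix.vecTail]
    ring
end
end
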